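/- arXiv:1707.06102 — 3 statements merged into one kernel-verified Lean document; each statement's English description precedes it below -/
import Mathlib

section
/- Sharp radial logarithmic Sobolev inequality on the half-line: let n ≥ 1 be an integer and τ₀ > 0. For every continuously differentiable w : (0,∞) → ℝ such that ∫₀^∞ r^n w(r)² dr = 1, ∫₀^∞ r^n w'(r)² dr < ∞, and r ↦ r^n w(r)² log(w(r)²) is Lebesgue integrable, one has 4τ₀ · ∫₀^∞ r^n w'(r)² dr ≥ ∫₀^∞ r^n w(r)² log(w(r)²) dr + ((n+1)/2) · log(4πτ₀) + (n+1) − log(ω_n). -/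
open MeasureTheory Set

noncomputable def sphereVolume (n : ℕ) : ℝ :=
  2 * Real.pi ^ (((n : ℝ) + 1) / 2) / Real.Gamma (((n : ℝ) + 1) / 2)

/-!
The proof is by monotone transport, after Cordero-Erausquin. The weight `f(r) = r ^ n w(r)²` is a
probability density on `(0, ∞)`, and so is the radial heat kernel
`γ(t) = ω_n (4πτ)^(-(n+1)/2) t ^ n e^(-t²/4τ)`. Let `T` be the increasing map carrying `κ f` to `γ`,
the remaining mass `1 - κ` being split between the two ends so that `T` stays bounded. Then
`T' = κ f / γ(T)`; taking logarithms, applying `log x ≤ x - 1` to `T'` and to `T / r`, and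
completing a square gives the pointwise bound
`f log w² ≤ (log ω_n - (n+1)/2 log (4πτ) - (n+1) - log κ) f + 4τ r ^ n w'² + (f T)'`.
When it is integrated, the boundary term `f T` is nonnegative at `0` and tends to `0` along a
sequence `r → ∞`, because `T` is bounded and `f` is integrable; finally `κ → 1`.
-/

open Filter Topology Real

theorem integrableOn_of_integral_eq_one {f : ℝ → ℝ} {s : Set ℝ} (hf : ∫ t in s, f t = 1) :
    IntegrableOn f s :=
  Integrable.of_integral_ne_zero (hf ▸ one_ne_zero)

theorem intervalIntegral_mem_Icc_of_integral_Ioi_eq_one {f : ℝ → ℝ}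
    (hf_nonneg : ∀ t, 0 < t → 0 ≤ f t) (hf_one : ∫ t in Ioi 0, f t = 1) {s : ℝ} (hs : 0 ≤ s) :
    ∫ t in (0 : ℝ)..s, f t ∈ Icc 0 1 := by
  have hf_nonneg' : 0 ≤ᵐ[volume.restrict (Ioi 0)] f :=
    (ae_restrict_mem measurableSet_Ioi).mono hf_nonneg
  rw [intervalIntegral.integral_of_le hs, ← hf_one]
  exact ⟨setIntegral_nonneg measurableSet_Ioc fun t ht => hf_nonneg t ht.1,
    setIntegral_mono_set (integrableOn_of_integral_eq_one hf_one) hf_nonneg'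
      Ioc_subset_Ioi_self.eventuallyLE⟩

theorem exists_seq_atTop_tendsto_zero_of_integrableOn_Ioi {f : ℝ → ℝ} {a : ℝ}
    (hf : IntegrableOn f (Ioi a)) :
    ∃ x : ℕ → ℝ, Tendsto x atTop atTop ∧ Tendsto (fun k => f (x k)) atTop (𝓝 0) := by
  have small (k : ℕ) : ∃ x, (k : ℝ) < x ∧ |f x| < 1 / ((k : ℝ) + 1) := by
    by_contra! hlarge
    have hconst : IntegrableOn (fun _ => 1 / ((k : ℝ) + 1)) (Ioi (max a k)) := by
      refine Integrable.mono' (hf.mono_set (Ioi_subset_Ioi (le_max_left a k))).norm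
        aestronglyMeasurable_const ?_
      filter_upwards [ae_restrict_mem measurableSet_Ioi] with x hx
      rw [Real.norm_of_nonneg (by positivity)]
      exact hlarge x ((le_max_right a k).trans_lt hx)
    rw [integrableOn_const_iff (by simp)] at hconst
    simp only [one_div, enorm_eq_zero, inv_eq_zero, volume_Ioi, lt_self_iff_false, or_false]
      at hconst
    exact absurd hconst (by positivity)
  choose x hx_gt hx_small using small
  refine ⟨x, tendsto_atTop_mono (fun k => (hx_gt k).le) tendsto_natCast_atTop_atTop, ?_⟩
  exact squeeze_zero_norm (fun k => (hx_small k).le) tendsto_one_div_add_atTop_nhds_zero_nat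

theorem integral_Ioi_nonneg_of_add_deriv_nonneg {H Φ Φ' : ℝ → ℝ} (hH : IntegrableOn H (Ioi 0))
    (hΦ : ∀ r, 0 < r → HasDerivAt Φ (Φ' r) r) (h_le : ∀ r, 0 < r → 0 ≤ H r + Φ' r)
    (hΦ_nonneg : ∀ r, 0 < r → 0 ≤ Φ r) {x : ℕ → ℝ} (hx : Tendsto x atTop atTop)
    (hΦx : Tendsto (fun k => Φ (x k)) atTop (𝓝 0)) : 0 ≤ ∫ r in Ioi 0, H r := by
  have h_step {c d : ℝ} (hc : 0 < c) (hcd : c ≤ d) : -Φ d ≤ ∫ r in Ioc c d, H r := by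
    have hpos : Icc c d ⊆ Ioi 0 := fun r hr => hc.trans_le hr.1
    have := intervalIntegral.sub_le_integral_of_hasDeriv_right_of_le (g := fun r => -Φ r)
      (g' := fun r => -Φ' r) hcd
      (fun r hr => (hΦ r (hpos hr)).continuousAt.continuousWithinAt.neg)
      (fun r hr => (hΦ r (hpos (Ioo_subset_Icc_self hr))).neg.hasDerivWithinAt)
      (hH.mono_set hpos)
      (fun r hr => by linarith [h_le r (hpos (Ioo_subset_Icc_self hr))])
    rw [intervalIntegral.integral_of_le hcd] at this
    linarith [hΦ_nonneg c hc]
  set c : ℕ → ℝ := fun k => 1 / ((k : ℝ) + 1)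
  have hc_pos (k : ℕ) : 0 < c k := by positivity
  have hc_le_one (k : ℕ) : c k ≤ 1 := div_le_one_of_le₀ (by simp) (by positivity)
  have h_cover : Tendsto (fun k => ∫ r in Ioc (c k) (x k), H r) atTop (𝓝 (∫ r in Ioi 0, H r)) := by
    have := ((aecover_Ioi_of_Ioi tendsto_one_div_add_atTop_nhds_zero_nat).inter
      (aecover_Iic hx)).integral_tendsto_of_countably_generated hH
    refine this.congr fun k => ?_
    rw [Measure.restrict_restrict_of_subset]
    · rfl
    · exact fun r hr => (hc_pos k).trans hr.1
  refine le_of_tendsto_of_tendsto (by simpa using hΦx.neg) h_cover ?_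
  filter_upwards [hx.eventually_ge_atTop 1] with k hk
  exact h_step (hc_pos k) ((hc_le_one k).trans hk)

section Quantile

/-- The inverse of `s ↦ ∫₀ˢ g` on `(0, ∞)`; off the range of that map its value is junk. -/
noncomputable def quantile (g : ℝ → ℝ) : ℝ → ℝ :=
  Function.invFunOn (fun s => ∫ t in (0 : ℝ)..s, g t) (Ioi 0)

variable {g : ℝ → ℝ} (hg : Continuous g) (hg_pos : ∀ s, 0 < s → 0 < g s)
  (hg_one : ∫ s in Ioi 0, g s = 1)

include hg hg_pos in
theorem strictMonoOn_primitive : StrictMonoOn (fun s => ∫ t in (0 : ℝ)..s, g t) (Ici 0) :=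
  strictMonoOn_of_deriv_pos (convex_Ici 0)
    (intervalIntegral.continuous_primitive (fun _ _ => hg.intervalIntegrable _ _) 0).continuousOn
    fun s hs => by
      rw [hg.deriv_integral]
      exact hg_pos s (interior_Ici.subset hs)

include hg hg_pos in
theorem quantile_primitive {s : ℝ} (hs : 0 < s) : quantile g (∫ t in (0 : ℝ)..s, g t) = s :=
  ((strictMonoOn_primitive hg hg_pos).injOn.mono Ioi_subset_Ici_self).leftInvOn_invFunOn hs

include hg hg_pos hg_one in
theorem primitive_mem_Ioo {s : ℝ} (hs : 0 < s) : ∫ t in (0 : ℝ)..s, g t ∈ Ioo 0 1 := by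
  have hmono := strictMonoOn_primitive hg hg_pos
  have h_le := intervalIntegral_mem_Icc_of_integral_Ioi_eq_one (fun t ht => (hg_pos t ht).le)
    hg_one (by linarith : 0 ≤ s + 1)
  refine ⟨by simpa using hmono self_mem_Ici hs.le hs, ?_⟩
  exact (hmono (mem_Ici.2 hs.le) (mem_Ici.2 (by linarith)) (lt_add_one s)).trans_le h_le.2

include hg hg_one in
theorem exists_primitive_eq {u : ℝ} (hu : u ∈ Ioo 0 1) :
    ∃ s ∈ Ioi 0, ∫ t in (0 : ℝ)..s, g t = u := by
  have h_tendsto : Tendsto (fun s => ∫ t in (0 : ℝ)..s, g t) atTop (𝓝 1) :=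
    hg_one ▸ intervalIntegral_tendsto_integral_Ioi 0 (integrableOn_of_integral_eq_one hg_one)
      tendsto_id
  obtain ⟨M, hM, hM_nonneg⟩ :=
    ((h_tendsto.eventually (eventually_gt_nhds hu.2)).and (eventually_ge_atTop 0)).exists
  have hu' : u ∈ Ioo (∫ t in (0 : ℝ)..0, g t) (∫ t in (0 : ℝ)..M, g t) := by
    simpa using ⟨hu.1, hM⟩
  obtain ⟨s, hs, rfl⟩ := intermediate_value_Ioo hM_nonneg
    (intervalIntegral.continuous_primitive (fun _ _ => hg.intervalIntegrable _ _) 0).continuousOn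
    hu'
  exact ⟨s, hs.1, rfl⟩

include hg hg_one in
theorem quantile_spec {u : ℝ} (hu : u ∈ Ioo 0 1) :
    0 < quantile g u ∧ ∫ t in (0 : ℝ)..quantile g u, g t = u :=
  Function.invFunOn_pos (exists_primitive_eq hg hg_one hu)

include hg hg_pos hg_one in
theorem monotoneOn_quantile : MonotoneOn (quantile g) (Ioo 0 1) := by
  intro u hu v hv huv
  have hu' := quantile_spec hg hg_one hu
  have hv' := quantile_spec hg hg_one hv
  rw [← (strictMonoOn_primitive hg hg_pos).le_iff_le hu'.1.le hv'.1.le, hu'.2, hv'.2]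
  exact huv

include hg hg_pos hg_one in
theorem continuousAt_quantile {u : ℝ} (hu : u ∈ Ioo 0 1) : ContinuousAt (quantile g) u := by
  refine continuousAt_of_monotoneOn_of_image_mem_nhds (monotoneOn_quantile hg hg_pos hg_one)
    (Ioo_mem_nhds hu.1 hu.2) (mem_of_superset (Ioi_mem_nhds (quantile_spec hg hg_one hu).1) ?_)
  exact fun s hs => ⟨_, primitive_mem_Ioo hg hg_pos hg_one hs, quantile_primitive hg hg_pos hs⟩

include hg hg_pos hg_one in
theorem hasDerivAt_quantile {u : ℝ} (hu : u ∈ Ioo 0 1) :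
    HasDerivAt (quantile g) (g (quantile g u))⁻¹ u := by
  have hq := quantile_spec hg hg_one hu
  refine HasDerivAt.of_local_left_inverse (continuousAt_quantile hg hg_pos hg_one hu)
    (hg.integral_hasStrictDerivAt 0 _).hasDerivAt (hg_pos _ hq.1).ne' ?_
  filter_upwards [Ioo_mem_nhds hu.1 hu.2] with v hv
  exact (quantile_spec hg hg_one hv).2

end Quantile

section Transport

/-- The increasing map carrying `κ f`, completed by mass `(1 - κ) / 2` at each end, to `g`;
squeezing the levels into `[(1 - κ) / 2, (1 + κ) / 2] ⊂ (0, 1)` keeps it bounded. -/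
noncomputable def monotoneTransport (g f : ℝ → ℝ) (κ r : ℝ) : ℝ :=
  quantile g ((1 - κ) / 2 + κ * ∫ t in (0 : ℝ)..r, f t)

variable {g f : ℝ → ℝ} {κ : ℝ} (hg : Continuous g) (hg_pos : ∀ s, 0 < s → 0 < g s)
  (hg_one : ∫ s in Ioi 0, g s = 1) (hf_nonneg : ∀ t, 0 < t → 0 ≤ f t)
  (hf_one : ∫ t in Ioi 0, f t = 1) (hκ : κ ∈ Ioo 0 1)

include hf_nonneg hf_one hκ in
theorem monotoneTransport_level_mem_Icc {r : ℝ} (hr : 0 < r) :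
    (1 - κ) / 2 + κ * ∫ t in (0 : ℝ)..r, f t ∈ Icc ((1 - κ) / 2) ((1 + κ) / 2) := by
  have hF := intervalIntegral_mem_Icc_of_integral_Ioi_eq_one hf_nonneg hf_one hr.le
  constructor <;> nlinarith [hF.1, hF.2, hκ.1]

include hf_nonneg hf_one hκ in
theorem monotoneTransport_level_mem_Ioo {r : ℝ} (hr : 0 < r) :
    (1 - κ) / 2 + κ * ∫ t in (0 : ℝ)..r, f t ∈ Ioo 0 1 := by
  have h := monotoneTransport_level_mem_Icc hf_nonneg hf_one hκ hr
  constructor <;> linarith [h.1, h.2, hκ.2]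

include hg hg_one hf_nonneg hf_one hκ in
theorem monotoneTransport_pos {r : ℝ} (hr : 0 < r) : 0 < monotoneTransport g f κ r :=
  (quantile_spec hg hg_one (monotoneTransport_level_mem_Ioo hf_nonneg hf_one hκ hr)).1

include hg hg_pos hg_one hf_nonneg hf_one hκ in
theorem monotoneTransport_le {r : ℝ} (hr : 0 < r) :
    monotoneTransport g f κ r ≤ quantile g ((1 + κ) / 2) :=
  monotoneOn_quantile hg hg_pos hg_one (monotoneTransport_level_mem_Ioo hf_nonneg hf_one hκ hr)
    ⟨by linarith [hκ.1], by linarith [hκ.2]⟩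
    (monotoneTransport_level_mem_Icc hf_nonneg hf_one hκ hr).2

include hg hg_pos hg_one hf_nonneg hf_one hκ in
theorem hasDerivAt_monotoneTransport (hf : ContinuousOn f (Ioi 0)) {r : ℝ} (hr : 0 < r) :
    HasDerivAt (monotoneTransport g f κ) (κ * f r / g (monotoneTransport g f κ r)) r := by
  have hF : HasDerivAt (fun s => ∫ t in (0 : ℝ)..s, f t) (f r) r :=
    intervalIntegral.integral_hasDerivAt_right
      ((intervalIntegrable_iff_integrableOn_Ioc_of_le hr.le).2
        ((integrableOn_of_integral_eq_one hf_one).mono_set Ioc_subset_Ioi_self))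
      (hf.stronglyMeasurableAtFilter isOpen_Ioi r hr) (hf.continuousAt (Ioi_mem_nhds hr))
  rw [div_eq_inv_mul]
  exact (hasDerivAt_quantile hg hg_pos hg_one
    (monotoneTransport_level_mem_Ioo hf_nonneg hf_one hκ hr)).comp r ((hF.const_mul κ).const_add _)

include hg hg_pos hg_one hf_nonneg hf_one hκ in
theorem exists_seq_mul_monotoneTransport_tendsto_zero :
    ∃ x : ℕ → ℝ, Tendsto x atTop atTop ∧
      Tendsto (fun k => f (x k) * monotoneTransport g f κ (x k)) atTop (𝓝 0) := by
  obtain ⟨x, hx, hfx⟩ :=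
    exists_seq_atTop_tendsto_zero_of_integrableOn_Ioi (integrableOn_of_integral_eq_one hf_one)
  refine ⟨x, hx, squeeze_zero' ?_ ?_ (by simpa using hfx.mul_const (quantile g ((1 + κ) / 2)))⟩
  · filter_upwards [hx.eventually_gt_atTop 0] with k hk
    exact mul_nonneg (hf_nonneg _ hk) (monotoneTransport_pos hg hg_one hf_nonneg hf_one hκ hk).le
  · filter_upwards [hx.eventually_gt_atTop 0] with k hk
    exact mul_le_mul_of_nonneg_left
      (monotoneTransport_le hg hg_pos hg_one hf_nonneg hf_one hκ hk) (hf_nonneg _ hk)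

end Transport

section RadialGaussian

theorem sphereVolume_pos (n : ℕ) : 0 < sphereVolume n := by
  have := Gamma_pos_of_pos (by positivity : (0 : ℝ) < ((n : ℝ) + 1) / 2)
  unfold sphereVolume
  positivity

/-- The radial profile of the heat kernel of `ℝⁿ⁺¹` at time `τ`: the density on `(0, ∞)` of the
norm of a centred Gaussian vector with covariance `2τ`. -/
noncomputable def radialGaussian (n : ℕ) (τ t : ℝ) : ℝ :=
  sphereVolume n / (4 * π * τ) ^ (((n : ℝ) + 1) / 2) * t ^ n * exp (-(t ^ 2 / (4 * τ)))

theorem continuous_radialGaussian (n : ℕ) (τ : ℝ) : Continuous (radialGaussian n τ) := by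
  unfold radialGaussian
  fun_prop

variable {n : ℕ} {τ : ℝ}

theorem radialGaussian_pos (hτ : 0 < τ) {t : ℝ} (ht : 0 < t) : 0 < radialGaussian n τ t := by
  have := sphereVolume_pos n
  unfold radialGaussian
  positivity

theorem log_radialGaussian (hτ : 0 < τ) {t : ℝ} (ht : 0 < t) :
    log (radialGaussian n τ t) = log (sphereVolume n) - ((n : ℝ) + 1) / 2 * log (4 * π * τ)
      + n * log t - t ^ 2 / (4 * τ) := by
  have := sphereVolume_pos n
  unfold radialGaussian
  rw [log_mul (by positivity) (exp_pos _).ne', log_mul (by positivity) (by positivity),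
    log_div this.ne' (by positivity), log_rpow (by positivity), log_pow, log_exp]
  ring

theorem integral_radialGaussian (hτ : 0 < τ) : ∫ t in Ioi 0, radialGaussian n τ t = 1 := by
  have h_moment : ∫ t in Ioi (0 : ℝ), t ^ n * exp (-(t ^ 2 / (4 * τ)))
      = (4 * τ) ^ (((n : ℝ) + 1) / 2) * (1 / 2) * Gamma (((n : ℝ) + 1) / 2) := by
    have h := integral_rpow_mul_exp_neg_mul_rpow two_pos
      (neg_one_lt_zero.trans_le n.cast_nonneg) (inv_pos.2 (by positivity : (0 : ℝ) < 4 * τ))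
    rw [inv_rpow (by positivity), ← rpow_neg (by positivity), neg_div, neg_neg] at h
    rw [← h]
    refine setIntegral_congr_fun measurableSet_Ioi fun t _ => ?_
    rw [rpow_natCast, rpow_two, neg_mul, inv_mul_eq_div]
  have hΓ := Gamma_pos_of_pos (by positivity : (0 : ℝ) < ((n : ℝ) + 1) / 2)
  have h4πτ : (4 * π * τ) ^ (((n : ℝ) + 1) / 2)
      = (4 * τ) ^ (((n : ℝ) + 1) / 2) * π ^ (((n : ℝ) + 1) / 2) := by
    rw [mul_right_comm, mul_rpow (by positivity) pi_pos.le]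
  simp_rw [radialGaussian, h4πτ, mul_assoc, integral_const_mul, h_moment, sphereVolume]
  field_simp

/-- With `a = w r`, `b = w' r` and `t = T r` for the transport map `T`, the last summand is
`(r ^ n w² T)'`. -/
theorem mul_log_sq_le_energy_add_deriv (hτ : 0 < τ) {κ r t a b : ℝ} (hκ : 0 < κ) (hr : 0 < r)
    (ht : 0 < t) :
    r ^ n * a ^ 2 * log (a ^ 2)
      ≤ (log (sphereVolume n) - ((n : ℝ) + 1) / 2 * log (4 * π * τ) - (n + 1) - log κ)
          * (r ^ n * a ^ 2) + 4 * τ * (r ^ n * b ^ 2)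
        + ((n * r ^ (n - 1) * a ^ 2 + r ^ n * (2 * a * b)) * t
          + r ^ n * a ^ 2 * (κ * (r ^ n * a ^ 2) / radialGaussian n τ t)) := by
  have hγ := radialGaussian_pos (n := n) hτ ht
  have hrn : 0 < r ^ n := pow_pos hr n
  have h_square : 0 ≤ 4 * τ * (r ^ n * b ^ 2) + r ^ n * (2 * a * b) * t
      + r ^ n * a ^ 2 * (t ^ 2 / (4 * τ)) := by
    have : 0 ≤ r ^ n * (4 * τ * b + a * t) ^ 2 / (4 * τ) := by positivity
    convert this using 1
    field_simp
    ring
  have h_pow : (n : ℝ) * r ^ (n - 1) * r = n * r ^ n := by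
    rcases n with _ | n
    · simp
    · rw [Nat.add_sub_cancel, pow_succ]
      ring
  rcases eq_or_ne a 0 with rfl | ha
  · simp only [ne_eq, OfNat.ofNat_ne_zero, not_false_eq_true, zero_pow, mul_zero, zero_mul,
      add_zero, zero_add] at h_square ⊢
    positivity
  set f := r ^ n * a ^ 2 with hf_def
  have hf : 0 < f := by positivity
  set θ := κ * f / radialGaussian n τ t
  have hθ : 0 < θ := by positivity
  have h_log_θ : log θ = log κ + n * log r + log (a ^ 2) - log (radialGaussian n τ t) := by
    rw [log_div (by positivity) hγ.ne', log_mul hκ.ne' hf.ne', hf_def,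
      log_mul hrn.ne' (by positivity), log_pow]
    ring
  have h_log_ratio : n * (log t - log r) ≤ n * (t / r - 1) := by
    rw [← log_div ht.ne' hr.ne']
    exact mul_le_mul_of_nonneg_left (log_le_sub_one_of_pos (by positivity)) n.cast_nonneg
  have h_log_sq : log (a ^ 2) ≤ θ - 1 - log κ
      + (log (sphereVolume n) - ((n : ℝ) + 1) / 2 * log (4 * π * τ))
      + n * (t / r - 1) - t ^ 2 / (4 * τ) := by
    linarith [log_le_sub_one_of_pos hθ, log_radialGaussian (n := n) hτ ht]
  have h_ratio : f * (n * (t / r - 1)) = n * r ^ (n - 1) * a ^ 2 * t - n * f := by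
    rw [hf_def]
    field_simp
    linear_combination (-t) * h_pow
  have := mul_le_mul_of_nonneg_left h_log_sq hf.le
  nlinarith

end RadialGaussian

theorem integral_radialLogSobolevDefect_nonneg {n : ℕ} {τ κ : ℝ} {w : ℝ → ℝ} (hτ : 0 < τ)
    (hκ : κ ∈ Ioo 0 1) (hw : ContDiffOn ℝ 1 w (Ioi 0))
    (hnorm : ∫ r in Ioi (0 : ℝ), r ^ n * w r ^ 2 = 1)
    (hH : IntegrableOn (fun r =>
      (log (sphereVolume n) - ((n : ℝ) + 1) / 2 * log (4 * π * τ) - (n + 1) - log κ)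
        * (r ^ n * w r ^ 2) + 4 * τ * (r ^ n * deriv w r ^ 2) - r ^ n * w r ^ 2 * log (w r ^ 2))
      (Ioi 0)) :
    0 ≤ ∫ r in Ioi 0,
      ((log (sphereVolume n) - ((n : ℝ) + 1) / 2 * log (4 * π * τ) - (n + 1) - log κ)
        * (r ^ n * w r ^ 2) + 4 * τ * (r ^ n * deriv w r ^ 2)
        - r ^ n * w r ^ 2 * log (w r ^ 2)) := by
  set f : ℝ → ℝ := fun r => r ^ n * w r ^ 2
  set T := monotoneTransport (radialGaussian n τ) f κ
  have hf_nonneg (r : ℝ) (hr : 0 < r) : 0 ≤ f r := by positivity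
  have hf_cont : ContinuousOn f (Ioi 0) := (continuousOn_pow n).mul (hw.continuousOn.pow 2)
  have hf_deriv (r : ℝ) (hr : 0 < r) :
      HasDerivAt f (n * r ^ (n - 1) * w r ^ 2 + r ^ n * (2 * w r * deriv w r)) r := by
    have hw_deriv : HasDerivAt w (deriv w r) r :=
      ((hw.differentiableOn one_ne_zero).differentiableAt (Ioi_mem_nhds hr)).hasDerivAt
    exact ((hasDerivAt_pow n r).mul (hw_deriv.pow 2)).congr_deriv (by
      simp only [Pi.pow_apply, Nat.cast_ofNat, Nat.add_one_sub_one, pow_one])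
  have hγ := continuous_radialGaussian n τ
  have hγ_pos (t : ℝ) (ht : 0 < t) := radialGaussian_pos (n := n) hτ ht
  have hγ_one := integral_radialGaussian (n := n) hτ
  have hT_pos (r : ℝ) (hr : 0 < r) : 0 < T r :=
    monotoneTransport_pos hγ hγ_one hf_nonneg hnorm hκ hr
  obtain ⟨x, hx, hfTx⟩ :=
    exists_seq_mul_monotoneTransport_tendsto_zero hγ hγ_pos hγ_one hf_nonneg hnorm hκ
  refine integral_Ioi_nonneg_of_add_deriv_nonneg hH (fun r hr => (hf_deriv r hr).mul
      (hasDerivAt_monotoneTransport hγ hγ_pos hγ_one hf_nonneg hnorm hκ hf_cont hr))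
    (fun r hr => ?_) (fun r hr => mul_nonneg (hf_nonneg r hr) (hT_pos r hr).le) hx hfTx
  have := mul_log_sq_le_energy_add_deriv (n := n) (a := w r) (b := deriv w r) hτ hκ.1 hr
    (hT_pos r hr)
  simp only [f, T] at this ⊢
  linarith

theorem radial_log_sobolev_add_log_le {n : ℕ} {τ κ : ℝ} {w : ℝ → ℝ} (hτ : 0 < τ)
    (hκ : κ ∈ Ioo 0 1) (hw : ContDiffOn ℝ 1 w (Ioi 0))
    (hnorm : ∫ r in Ioi (0 : ℝ), r ^ n * w r ^ 2 = 1)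
    (hgrad : IntegrableOn (fun r => r ^ n * deriv w r ^ 2) (Ioi 0))
    (hent : IntegrableOn (fun r => r ^ n * w r ^ 2 * log (w r ^ 2)) (Ioi 0)) :
    (∫ r in Ioi (0 : ℝ), r ^ n * w r ^ 2 * log (w r ^ 2))
        + ((n : ℝ) + 1) / 2 * log (4 * π * τ) + ((n : ℝ) + 1) - log (sphereVolume n) + log κ
      ≤ 4 * τ * ∫ r in Ioi (0 : ℝ), r ^ n * deriv w r ^ 2 := by
  set A := log (sphereVolume n) - ((n : ℝ) + 1) / 2 * log (4 * π * τ) - (n + 1) - log κ with hA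
  have hA_int : IntegrableOn (fun r => A * (r ^ n * w r ^ 2) + 4 * τ * (r ^ n * deriv w r ^ 2))
      (Ioi 0) :=
    ((integrableOn_of_integral_eq_one hnorm).const_mul A).add (hgrad.const_mul _)
  have h := integral_radialLogSobolevDefect_nonneg hτ hκ hw hnorm (hA_int.sub hent)
  rw [integral_sub hA_int hent, integral_add ((integrableOn_of_integral_eq_one hnorm).const_mul A)
    (hgrad.const_mul _), integral_const_mul, integral_const_mul, hnorm] at h
  linarith

theorem radial_log_sobolev_inequality_general
    (n : ℕ) (τ₀ : ℝ) (hτ₀ : 0 < τ₀) (w : ℝ → ℝ)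
    (hw : ContDiffOn ℝ 1 w (Ioi 0))
    (hnorm : ∫ r in Ioi (0 : ℝ), r ^ n * (w r) ^ 2 = 1)
    (hgrad : IntegrableOn (fun r : ℝ => r ^ n * (deriv w r) ^ 2) (Ioi 0))
    (hent : IntegrableOn (fun r : ℝ => r ^ n * (w r) ^ 2 * Real.log ((w r) ^ 2)) (Ioi 0)) :
    4 * τ₀ * ∫ r in Ioi (0 : ℝ), r ^ n * (deriv w r) ^ 2
      ≥ (∫ r in Ioi (0 : ℝ), r ^ n * (w r) ^ 2 * Real.log ((w r) ^ 2))
        + (((n : ℝ) + 1) / 2) * Real.log (4 * Real.pi * τ₀) + ((n : ℝ) + 1)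
        - Real.log (sphereVolume n) := by
  refine le_of_forall_pos_le_add fun δ hδ => ?_
  have h := radial_log_sobolev_add_log_le hτ₀
    ⟨exp_pos (-δ), exp_lt_one_iff.2 (neg_lt_zero.2 hδ)⟩ hw hnorm hgrad hent
  rw [log_exp] at h
  linarith

/-- **Sharp radial logarithmic Sobolev inequality on the half-line.**
For `n ≥ 1`, `τ₀ > 0` and a continuously differentiable `w : (0,∞) → ℝ` with
`∫₀^∞ r^n w(r)² dr = 1`, finite weighted Dirichlet energy, and integrable entropy term:
`4τ₀ ∫₀^∞ r^n w'(r)² dr ≥ ∫₀^∞ r^n w(r)² log(w(r)²) dr + ((n+1)/2) log(4πτ₀) + (n+1) − log ω_n`. -/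
theorem radial_log_sobolev_inequality
    (n : ℕ) (hn : 1 ≤ n) (τ₀ : ℝ) (hτ₀ : 0 < τ₀) (w : ℝ → ℝ)
    (hw : ContDiffOn ℝ 1 w (Ioi 0))
    (hnorm : ∫ r in Ioi (0 : ℝ), r ^ n * (w r) ^ 2 = 1)
    (hgrad : IntegrableOn (fun r : ℝ => r ^ n * (deriv w r) ^ 2) (Ioi 0))
    (hent : IntegrableOn (fun r : ℝ => r ^ n * (w r) ^ 2 * Real.log ((w r) ^ 2)) (Ioi 0)) :
    4 * τ₀ * ∫ r in Ioi (0 : ℝ), r ^ n * (deriv w r) ^ 2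
      ≥ (∫ r in Ioi (0 : ℝ), r ^ n * (w r) ^ 2 * Real.log ((w r) ^ 2))
        + (((n : ℝ) + 1) / 2) * Real.log (4 * Real.pi * τ₀) + ((n : ℝ) + 1)
        - Real.log (sphereVolume n) :=
  radial_log_sobolev_inequality_general n τ₀ hτ₀ w hw hnorm hgrad hent
end

section
/- Positivity of the Hardy-controlled part of the cone entropy functional: let n ≥ 2 be an integer, let K be a real number with −(n−1)² < K < 0, let τ₀ > 0, and let τ ≥ τ₀/(1 − (−K)/(n−1)²). Then for every continuously differentiable w : (0,∞) → ℝ with 0 < ∫₀^∞ r^(n−2) w(r)² dr < ∞ and ∫₀^∞ r^n w'(r)² dr < ∞, one has ∫₀^∞ (4(τ−τ₀) r^n w'(r)² + τ K r^(n−2) w(r)²) dr > 0. -/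
/-!
The negative term is absorbed by the strict weighted Hardy inequality
`((n - 1) / 2)² ∫ r^(n-2) w² < ∫ r^n w'²`. Write `n = m + 2`, `c = (m + 1) / 2` and expand
`0 ≤ ∫ r^m (r w' + c w)² = ∫ r^(m+2) w'² + 2c ∫ r^(m+1) w w' + c² ∫ r^m w²`.
Integrating `(r^(m+1) w²)' = (m + 1) r^m w² + 2 r^(m+1) w w'` over `(0, ∞)` gives
`∫ r^(m+1) w w' = -c ∫ r^m w²`: the boundary terms vanish because `r^(m+1) w² / r` is integrable.
So the square integral equals `∫ r^(m+2) w'² - c² ∫ r^m w²`, and it is positive: otherwise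
`r w' + c w ≡ 0`, which makes `r^(m+1) w²` constant, hence zero by the same integrability.
-/

open MeasureTheory Set Real

section HalfLine

variable {E : Type*} [NormedAddCommGroup E] [NormedSpace ℝ E]

theorem integrableOn_Ioi_zero_iff_integrable_exp_smul_comp_exp {g : ℝ → E} :
    IntegrableOn g (Ioi 0) ↔ Integrable fun t => exp t • g (exp t) := by
  simpa [range_exp, abs_of_pos (exp_pos _)] using
    integrableOn_image_iff_integrableOn_abs_deriv_smul MeasurableSet.univ
      (fun t _ => (hasDerivAt_exp t).hasDerivWithinAt) exp_injective.injOn g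

theorem integral_Ioi_zero_eq_integral_exp_smul_comp_exp (g : ℝ → E) :
    ∫ x in Ioi 0, g x = ∫ t, exp t • g (exp t) := by
  simpa [range_exp, abs_of_pos (exp_pos _)] using
    integral_image_eq_integral_abs_deriv_smul MeasurableSet.univ
      (fun t _ => (hasDerivAt_exp t).hasDerivWithinAt) exp_injective.injOn g

/-- The substitution `x = exp t` sends both ends of `(0, ∞)` to `±∞`, where `F ∘ exp` and its
derivative are integrable on `ℝ`. -/
theorem integral_Ioi_zero_eq_zero_of_hasDerivAt_of_integrableOn_inv_smul {F F' : ℝ → E}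
    (hderiv : ∀ x ∈ Ioi 0, HasDerivAt F (F' x) x) (hF' : IntegrableOn F' (Ioi 0))
    (hF : IntegrableOn (fun x => x⁻¹ • F x) (Ioi 0)) : ∫ x in Ioi 0, F' x = 0 := by
  rw [integral_Ioi_zero_eq_integral_exp_smul_comp_exp]
  refine integral_eq_zero_of_hasDerivAt_of_integrable (f := F ∘ exp)
    (fun t => (hderiv _ (exp_pos t)).scomp t (hasDerivAt_exp t))
    (integrableOn_Ioi_zero_iff_integrable_exp_smul_comp_exp.1 hF') ?_
  simpa [Function.comp_def, smul_smul, (exp_pos _).ne'] using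
    integrableOn_Ioi_zero_iff_integrable_exp_smul_comp_exp.1 hF

theorem eqOn_zero_of_deriv_eq_zero_of_integrableOn_inv_smul {F : ℝ → E}
    (hF : DifferentiableOn ℝ F (Ioi 0)) (hF' : EqOn (deriv F) 0 (Ioi 0))
    (hint : IntegrableOn (fun x => x⁻¹ • F x) (Ioi 0)) : EqOn F 0 (Ioi 0) := by
  obtain ⟨a, ha⟩ := isOpen_Ioi.exists_is_const_of_deriv_eq_zero isPreconnected_Ioi hF hF'
  obtain rfl | ha0 := eq_or_ne a 0
  · exact ha
  have hinv : IntegrableOn (fun x : ℝ => x⁻¹) (Ioi 0) := by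
    refine IntegrableOn.congr_fun (hint.norm.div_const ‖a‖) (fun x hx => ?_) measurableSet_Ioi
    simp [ha x hx, norm_smul, ha0, (mem_Ioi.1 hx).le]
  exact absurd hinv not_integrableOn_Ioi_inv

end HalfLine

theorem setIntegral_pos_of_continuousOn_of_nonneg {α : Type*} [TopologicalSpace α]
    [MeasurableSpace α] [OpensMeasurableSpace α] {μ : Measure α} [μ.IsOpenPosMeasure]
    {f : α → ℝ} {s : Set α} {x : α} (hs : IsOpen s) (hf : ContinuousOn f s)
    (hfi : IntegrableOn f s μ) (hnonneg : ∀ y ∈ s, 0 ≤ f y) (hx : x ∈ s) (hfx : f x ≠ 0) :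
    0 < ∫ y in s, f y ∂μ := by
  rw [setIntegral_pos_iff_support_of_nonneg_ae
    (ae_restrict_of_forall_mem hs.measurableSet hnonneg) hfi, inter_comm]
  exact (hf.isOpen_inter_preimage hs isOpen_compl_singleton).measure_pos μ ⟨x, hx, hfx⟩

section WeightedHardy

variable {m : ℕ} {w : ℝ → ℝ}

theorem hasDerivAt_pow_succ_mul_sq {w' r : ℝ} (hw : HasDerivAt w w' r) :
    HasDerivAt (fun r => r ^ (m + 1) * w r ^ 2)
      ((m + 1) * (r ^ m * w r ^ 2) + 2 * (r ^ (m + 1) * (w r * w'))) r := by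
  refine ((hasDerivAt_pow (m + 1) r).mul (hw.pow 2)).congr_deriv ?_
  simp only [Nat.add_sub_cancel, Pi.pow_apply]
  push_cast
  ring

theorem integrableOn_inv_smul_pow_succ_mul_sq
    (hI : IntegrableOn (fun r => r ^ m * w r ^ 2) (Ioi 0)) :
    IntegrableOn (fun r => r⁻¹ • (r ^ (m + 1) * w r ^ 2)) (Ioi 0) := by
  refine hI.congr_fun (fun r (hr : 0 < r) => ?_) measurableSet_Ioi
  rw [smul_eq_mul, pow_succ]
  field_simp

theorem abs_pow_succ_mul_mul_le {r a b : ℝ} (hr : 0 ≤ r) :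
    |r ^ (m + 1) * (a * b)| ≤ r ^ m * a ^ 2 + r ^ (m + 2) * b ^ 2 := by
  have hab : |a| * (r * |b|) ≤ a ^ 2 + (r * |b|) ^ 2 := by
    nlinarith [two_mul_le_add_sq |a| (r * |b|), sq_abs a,
      mul_nonneg (abs_nonneg a) (mul_nonneg hr (abs_nonneg b))]
  calc |r ^ (m + 1) * (a * b)| = r ^ m * (|a| * (r * |b|)) := by
        rw [abs_mul, abs_mul, abs_of_nonneg (pow_nonneg hr _)]; ring
    _ ≤ r ^ m * (a ^ 2 + (r * |b|) ^ 2) := by gcongr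
    _ = r ^ m * a ^ 2 + r ^ (m + 2) * b ^ 2 := by rw [mul_pow, sq_abs]; ring

theorem integrableOn_pow_succ_mul_mul_deriv (hw : ContDiffOn ℝ 1 w (Ioi 0))
    (hI : IntegrableOn (fun r => r ^ m * w r ^ 2) (Ioi 0))
    (hJ : IntegrableOn (fun r => r ^ (m + 2) * deriv w r ^ 2) (Ioi 0)) :
    IntegrableOn (fun r => r ^ (m + 1) * (w r * deriv w r)) (Ioi 0) := by
  refine (hI.add hJ).mono' ?_ ?_
  · exact ((continuousOn_pow _).mul (hw.continuousOn.mul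
      (hw.continuousOn_deriv_of_isOpen isOpen_Ioi le_rfl))).aestronglyMeasurable measurableSet_Ioi
  · filter_upwards [ae_restrict_mem measurableSet_Ioi] with r (hr : 0 < r)
    exact abs_pow_succ_mul_mul_le hr.le

theorem integral_pow_succ_mul_mul_deriv (hw : ContDiffOn ℝ 1 w (Ioi 0))
    (hI : IntegrableOn (fun r => r ^ m * w r ^ 2) (Ioi 0))
    (hJ : IntegrableOn (fun r => r ^ (m + 2) * deriv w r ^ 2) (Ioi 0)) :
    ∫ r in Ioi 0, r ^ (m + 1) * (w r * deriv w r)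
      = -((m + 1) / 2) * ∫ r in Ioi 0, r ^ m * w r ^ 2 := by
  have hM := integrableOn_pow_succ_mul_mul_deriv hw hI hJ
  have h := integral_Ioi_zero_eq_zero_of_hasDerivAt_of_integrableOn_inv_smul
    (fun r hr => hasDerivAt_pow_succ_mul_sq (hw.differentiableOn_one.differentiableAt
      (isOpen_Ioi.mem_nhds hr)).hasDerivAt)
    ((hI.const_mul _).add (hM.const_mul _)) (integrableOn_inv_smul_pow_succ_mul_sq hI)
  rw [integral_add (hI.const_mul _) (hM.const_mul _), integral_const_mul,
    integral_const_mul] at h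
  linarith

theorem eqOn_zero_of_mul_deriv_add_eq_zero (hw : ContDiffOn ℝ 1 w (Ioi 0))
    (hI : IntegrableOn (fun r => r ^ m * w r ^ 2) (Ioi 0))
    (h : ∀ r ∈ Ioi 0, r * deriv w r + (m + 1) / 2 * w r = 0) : EqOn w 0 (Ioi 0) := by
  have hderiv : ∀ r ∈ Ioi (0 : ℝ), HasDerivAt (fun r => r ^ (m + 1) * w r ^ 2) 0 r := by
    intro r hr
    convert hasDerivAt_pow_succ_mul_sq (m := m) ((hw.differentiableOn_one.differentiableAt
      (isOpen_Ioi.mem_nhds hr)).hasDerivAt) using 1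
    linear_combination (-2 * r ^ m * w r) * h r hr
  have hF := eqOn_zero_of_deriv_eq_zero_of_integrableOn_inv_smul
    (fun r hr => (hderiv r hr).differentiableAt.differentiableWithinAt)
    (fun r hr => (hderiv r hr).deriv) (integrableOn_inv_smul_pow_succ_mul_sq hI)
  intro r (hr : 0 < r)
  simpa [hr.ne'] using hF hr

theorem integral_pow_mul_mul_deriv_add_sq_pos (hw : ContDiffOn ℝ 1 w (Ioi 0))
    (hI : IntegrableOn (fun r => r ^ m * w r ^ 2) (Ioi 0))
    (hpos : 0 < ∫ r in Ioi 0, r ^ m * w r ^ 2)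
    (hq : IntegrableOn (fun r => r ^ m * (r * deriv w r + (m + 1) / 2 * w r) ^ 2) (Ioi 0)) :
    0 < ∫ r in Ioi 0, r ^ m * (r * deriv w r + (m + 1) / 2 * w r) ^ 2 := by
  obtain ⟨r, hr, hne⟩ : ∃ r ∈ Ioi (0 : ℝ), r * deriv w r + (m + 1) / 2 * w r ≠ 0 := by
    by_contra! h
    have hw0 := eqOn_zero_of_mul_deriv_add_eq_zero hw hI h
    rw [setIntegral_congr_fun (g := fun _ => 0) measurableSet_Ioi
      (fun r hr => by simp [hw0 hr])] at hpos
    simp at hpos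
  have hqc : ContinuousOn (fun r => r ^ m * (r * deriv w r + (m + 1) / 2 * w r) ^ 2) (Ioi 0) :=
    (continuousOn_pow m).mul (((continuousOn_id.mul
      (hw.continuousOn_deriv_of_isOpen isOpen_Ioi le_rfl)).add
      (continuousOn_const.mul hw.continuousOn)).pow 2)
  exact setIntegral_pos_of_continuousOn_of_nonneg isOpen_Ioi hqc hq
    (fun r (hr : 0 < r) => by positivity) hr
    (mul_ne_zero (pow_ne_zero _ hr.ne') (pow_ne_zero _ hne))

theorem weighted_hardy_lt (hw : ContDiffOn ℝ 1 w (Ioi 0))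
    (hI : IntegrableOn (fun r => r ^ m * w r ^ 2) (Ioi 0))
    (hJ : IntegrableOn (fun r => r ^ (m + 2) * deriv w r ^ 2) (Ioi 0))
    (hpos : 0 < ∫ r in Ioi 0, r ^ m * w r ^ 2) :
    ((m + 1) / 2) ^ 2 * ∫ r in Ioi 0, r ^ m * w r ^ 2
      < ∫ r in Ioi 0, r ^ (m + 2) * deriv w r ^ 2 := by
  set c : ℝ := (m + 1) / 2
  have hM := integrableOn_pow_succ_mul_mul_deriv hw hI hJ
  have hexpand : ∀ r ∈ Ioi (0 : ℝ), r ^ m * (r * deriv w r + c * w r) ^ 2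
      = r ^ (m + 2) * deriv w r ^ 2 + 2 * c * (r ^ (m + 1) * (w r * deriv w r))
        + c ^ 2 * (r ^ m * w r ^ 2) := fun r _ => by ring
  have hJM : IntegrableOn (fun r => r ^ (m + 2) * deriv w r ^ 2
      + 2 * c * (r ^ (m + 1) * (w r * deriv w r))) (Ioi 0) := hJ.add (hM.const_mul _)
  have hq : IntegrableOn (fun r => r ^ m * (r * deriv w r + c * w r) ^ 2) (Ioi 0) :=
    (hJM.add (hI.const_mul _)).congr_fun (fun r hr => (hexpand r hr).symm) measurableSet_Ioi
  have hq_eq : ∫ r in Ioi 0, r ^ m * (r * deriv w r + c * w r) ^ 2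
      = (∫ r in Ioi 0, r ^ (m + 2) * deriv w r ^ 2) - c ^ 2 * ∫ r in Ioi 0, r ^ m * w r ^ 2 := by
    rw [setIntegral_congr_fun measurableSet_Ioi hexpand, integral_add hJM (hI.const_mul _),
      integral_add hJ (hM.const_mul _), integral_const_mul, integral_const_mul,
      integral_pow_succ_mul_mul_deriv hw hI hJ]
    ring
  linarith [integral_pow_mul_mul_deriv_add_sq_pos hw hI hpos hq]

end WeightedHardy

/-- **Positivity of the Hardy-controlled part of the cone entropy functional.**
For `n ≥ 2`, `−(n−1)² < K < 0`, `τ₀ > 0` and `τ ≥ τ₀/(1 − (−K)/(n−1)²)`,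
every continuously differentiable `w : (0,∞) → ℝ` with
`0 < ∫₀^∞ r^(n−2) w² dr < ∞` and `∫₀^∞ r^n w'² dr < ∞` satisfies
`∫₀^∞ (4(τ−τ₀) r^n w'(r)² + τ K r^(n−2) w(r)²) dr > 0`. -/
theorem hardy_controlled_positivity
    (n : ℕ) (hn : 2 ≤ n) (K τ₀ τ : ℝ)
    (hK₁ : -((n : ℝ) - 1) ^ 2 < K) (hK₂ : K < 0) (hτ₀ : 0 < τ₀)
    (hτ : τ ≥ τ₀ / (1 - (-K) / ((n : ℝ) - 1) ^ 2))
    (w : ℝ → ℝ) (hw : ContDiffOn ℝ 1 w (Ioi 0))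
    (hint : IntegrableOn (fun r : ℝ => r ^ (n - 2) * (w r) ^ 2) (Ioi 0))
    (hpos : 0 < ∫ r in Ioi (0 : ℝ), r ^ (n - 2) * (w r) ^ 2)
    (hint' : IntegrableOn (fun r : ℝ => r ^ n * (deriv w r) ^ 2) (Ioi 0)) :
    0 < ∫ r in Ioi (0 : ℝ),
        (4 * (τ - τ₀) * r ^ n * (deriv w r) ^ 2 + τ * K * r ^ (n - 2) * (w r) ^ 2) := by
  obtain ⟨m, rfl⟩ : ∃ m, n = m + 2 := ⟨n - 2, by omega⟩
  simp only [Nat.add_sub_cancel] at hint hpos ⊢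
  have hm : ((m + 2 : ℕ) : ℝ) - 1 = m + 1 := by push_cast; ring
  rw [hm] at hK₁ hτ
  have hsplit : ∫ r in Ioi (0 : ℝ), (4 * (τ - τ₀) * r ^ (m + 2) * deriv w r ^ 2
      + τ * K * r ^ m * w r ^ 2) = 4 * (τ - τ₀) * (∫ r in Ioi (0 : ℝ), r ^ (m + 2) * deriv w r ^ 2)
        + τ * K * ∫ r in Ioi (0 : ℝ), r ^ m * w r ^ 2 := by
    rw [← integral_const_mul, ← integral_const_mul,
      ← integral_add (hint'.const_mul _) (hint.const_mul _)]
    simp only [mul_assoc]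
  have hardy := weighted_hardy_lt hw hint hint' hpos
  have hJ := (mul_nonneg (by positivity) hpos.le).trans hardy.le
  have hsq : 0 < ((m : ℝ) + 1) ^ 2 := by positivity
  have hD : 0 < 1 - (-K) / ((m : ℝ) + 1) ^ 2 := by rw [sub_pos, div_lt_one hsq]; linarith
  have hτK : 0 < τ * -K := mul_pos ((div_pos hτ₀ hD).trans_le hτ) (neg_pos.2 hK₂)
  have hgap : τ * -K ≤ (τ - τ₀) * ((m : ℝ) + 1) ^ 2 := by
    have := (div_le_iff₀ hD).1 hτ
    field_simp at this
    linarith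
  rw [hsplit]
  refine pos_of_mul_pos_right (a := ((m : ℝ) + 1) ^ 2) ?_ hsq.le
  nlinarith [mul_le_mul_of_nonneg_right hgap hJ]
end

section
/- Reduction of the radial gradient term in the separation-of-variables formula (Jensen step): let n be a positive integer, τ > 0, and (N, ν) a measure space. Let a : (0,∞) → ℝ be differentiable and let f̃ : (0,∞) × N → ℝ be measurable and differentiable in the first variable, such that for every r > 0 one has ∫_N (r²/(4πτ))^(n/2) e^(−f̃(r,x)) dν(x) = 1, and assume integrability and domination hypotheses permitting differentiation under the integral sign of r ↦ ∫_N r^n e^(−f̃(r,x)) dν(x). Then ∫₀^∞ (∫_N (∂_r(a(r) + f̃(r,x)))² (r²/(4πτ))^(n/2) e^(−f̃(r,x)) dν(x)) (4πτ)^(−1/2) e^(−a(r)) dr ≥ ∫₀^∞ (a'(r) + n/r)² (4πτ)^(−1/2) e^(−a(r)) dr. -/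
open MeasureTheory Set

/-- **Reduction of the radial gradient term in the separation-of-variables formula
(Jensen step).**  Let `n` be a positive integer, `τ > 0`, `(N, ν)` a measure space,
`a : (0,∞) → ℝ` differentiable, and `f̃ : (0,∞) × N → ℝ` measurable and differentiable in
the first variable, with the fibrewise normalization
`∫_N (r²/(4πτ))^(n/2) e^(−f̃(r,x)) dν(x) = 1` for every `r > 0` and with integrability and
domination hypotheses permitting differentiation under the integral sign of
`r ↦ ∫_N rⁿ e^(−f̃(r,x)) dν(x)`.  Then
`∫₀^∞ (∫_N (∂_r(a(r)+f̃(r,x)))² (r²/(4πτ))^(n/2) e^(−f̃(r,x)) dν(x)) (4πτ)^(−1/2) e^(−a(r)) dr`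
`≥ ∫₀^∞ (a'(r) + n/r)² (4πτ)^(−1/2) e^(−a(r)) dr`. -/
theorem jensen_radial_gradient_reduction
    {N : Type*} [MeasurableSpace N] (ν : Measure N)
    (n : ℕ) (hn : 1 ≤ n) (τ : ℝ) (hτ : 0 < τ)
    (a : ℝ → ℝ) (ha : DifferentiableOn ℝ a (Ioi 0))
    (f : ℝ → N → ℝ)
    (hmeas : Measurable (Function.uncurry f))
    (hdiff : ∀ x : N, ∀ r ∈ Ioi (0 : ℝ), DifferentiableAt ℝ (fun s => f s x) r)
    -- fibrewise normalization
    (hnorm : ∀ r ∈ Ioi (0 : ℝ),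
      ∫ x, (r ^ 2 / (4 * Real.pi * τ)) ^ ((n : ℝ) / 2) * Real.exp (-(f r x)) ∂ν = 1)
    -- differentiation under the integral sign is permitted for
    -- `r ↦ ∫_N rⁿ e^(−f̃(r,x)) dν(x)`
    (hDUI₁ : ∀ r ∈ Ioi (0 : ℝ), Integrable (fun x : N =>
      (n : ℝ) * r ^ (n - 1) * Real.exp (-(f r x))
        - r ^ n * Real.exp (-(f r x)) * deriv (fun s => f s x) r) ν)
    (hDUI₂ : ∀ r ∈ Ioi (0 : ℝ),
      HasDerivAt (fun s : ℝ => ∫ x, s ^ n * Real.exp (-(f s x)) ∂ν)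
        (∫ x, ((n : ℝ) * r ^ (n - 1) * Real.exp (-(f r x))
          - r ^ n * Real.exp (-(f r x)) * deriv (fun s => f s x) r) ∂ν) r)
    -- fibrewise square-integrability of the radial derivative
    (hfib : ∀ r ∈ Ioi (0 : ℝ), Integrable (fun x : N =>
      (deriv a r + deriv (fun s => f s x) r) ^ 2
        * ((r ^ 2 / (4 * Real.pi * τ)) ^ ((n : ℝ) / 2) * Real.exp (-(f r x)))) ν)
    -- integrability of the two radial integrands
    (hintL : IntegrableOn (fun r : ℝ =>
      (∫ x, (deriv a r + deriv (fun s => f s x) r) ^ 2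
          * ((r ^ 2 / (4 * Real.pi * τ)) ^ ((n : ℝ) / 2) * Real.exp (-(f r x))) ∂ν)
        * ((4 * Real.pi * τ) ^ (-(1 : ℝ) / 2) * Real.exp (-(a r)))) (Ioi 0))
    (hintR : IntegrableOn (fun r : ℝ =>
      (deriv a r + (n : ℝ) / r) ^ 2
        * ((4 * Real.pi * τ) ^ (-(1 : ℝ) / 2) * Real.exp (-(a r)))) (Ioi 0)) :
    (∫ r in Ioi (0 : ℝ),
        (∫ x, (deriv a r + deriv (fun s => f s x) r) ^ 2
            * ((r ^ 2 / (4 * Real.pi * τ)) ^ ((n : ℝ) / 2) * Real.exp (-(f r x))) ∂ν)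
          * ((4 * Real.pi * τ) ^ (-(1 : ℝ) / 2) * Real.exp (-(a r))))
      ≥ ∫ r in Ioi (0 : ℝ),
          (deriv a r + (n : ℝ) / r) ^ 2
            * ((4 * Real.pi * τ) ^ (-(1 : ℝ) / 2) * Real.exp (-(a r))) := by
  have hπτ : (0:ℝ) < 4 * Real.pi * τ := by positivity
  set C : ℝ := (4 * Real.pi * τ) ^ ((n : ℝ) / 2) with hCdef
  have hCpos : 0 < C := Real.rpow_pos_of_pos hπτ _
  -- the coefficient identity
  have hcoef : ∀ s : ℝ, 0 < s →
      (s ^ 2 / (4 * Real.pi * τ)) ^ ((n : ℝ) / 2) = s ^ n / C := by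
    intro s hs
    rw [Real.div_rpow (by positivity) hπτ.le]
    congr 1
    rw [← Real.rpow_natCast s 2, ← Real.rpow_mul hs.le, ← Real.rpow_natCast s n]
    congr 1
    push_cast
    ring
  -- value of F on Ioi 0
  have hF : ∀ s ∈ Ioi (0:ℝ), (∫ x, s ^ n * Real.exp (-(f s x)) ∂ν) = C := by
    intro s hs
    have hs0 : (0:ℝ) < s := hs
    have h1 := hnorm s hs
    rw [hcoef s hs0] at h1
    have h2 : Integrable (fun x => s ^ n / C * Real.exp (-(f s x))) ν := by
      by_contra h
      rw [integral_undef h] at h1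
      norm_num at h1
    have hsn : (0:ℝ) < s ^ n := by positivity
    have h3 : Integrable (fun x => Real.exp (-(f s x))) ν := by
      have h4 := h2.const_mul (C / s ^ n)
      have heq : (fun x => C / s ^ n * (s ^ n / C * Real.exp (-(f s x))))
          = fun x => Real.exp (-(f s x)) := by
        funext x
        field_simp
      rwa [heq] at h4
    rw [integral_const_mul] at h1
    rw [integral_const_mul]
    field_simp at h1 ⊢
    linarith
  -- pointwise (in r) Jensen inequality
  have key : ∀ r ∈ Ioi (0:ℝ),
      (deriv a r + (n : ℝ) / r) ^ 2 ≤
        ∫ x, (deriv a r + deriv (fun s => f s x) r) ^ 2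
          * ((r ^ 2 / (4 * Real.pi * τ)) ^ ((n : ℝ) / 2) * Real.exp (-(f r x))) ∂ν := by
    intro r hr
    have hr0 : (0:ℝ) < r := hr
    have hrn : (0:ℝ) < r ^ n := by positivity
    set c : ℝ := (r ^ 2 / (4 * Real.pi * τ)) ^ ((n : ℝ) / 2) with hcdef
    have hcpos : 0 < c := Real.rpow_pos_of_pos (by positivity) _
    have hcC : c = r ^ n / C := hcoef r hr0
    set g : N → ℝ := fun x => deriv (fun s => f s x) r with hg
    set w : N → ℝ := fun x => c * Real.exp (-(f r x)) with hw
    -- integrability of the weight and its normalization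
    have hw_int : Integrable w ν := by
      by_contra h
      have h1 := hnorm r hr
      rw [show (fun x => (r ^ 2 / (4 * Real.pi * τ)) ^ ((n : ℝ) / 2) * Real.exp (-(f r x))) = w
        from rfl] at h1
      rw [integral_undef h] at h1
      norm_num at h1
    have hw_norm : ∫ x, w x ∂ν = 1 := hnorm r hr
    have he_int : Integrable (fun x => Real.exp (-(f r x))) ν := by
      have := hw_int.const_mul c⁻¹
      simpa [hw, inv_mul_cancel_left₀ hcpos.ne'] using this
    have he_val : ∫ x, Real.exp (-(f r x)) ∂ν = 1 / c := by
      have h1 : ∫ x, w x ∂ν = c * ∫ x, Real.exp (-(f r x)) ∂ν := by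
        simp [hw, integral_const_mul]
      rw [hw_norm] at h1
      field_simp
      linarith
    -- derivative of the constant function F is zero
    have hD0 : HasDerivAt (fun s : ℝ => ∫ x, s ^ n * Real.exp (-(f s x)) ∂ν) 0 r := by
      have hev : (fun s : ℝ => ∫ x, s ^ n * Real.exp (-(f s x)) ∂ν) =ᶠ[nhds r]
          (fun _ => C) := Filter.eventuallyEq_of_mem (Ioi_mem_nhds hr0) hF
      exact (hasDerivAt_const r C).congr_of_eventuallyEq hev
    have hzero : ∫ x, ((n : ℝ) * r ^ (n - 1) * Real.exp (-(f r x))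
        - r ^ n * Real.exp (-(f r x)) * g x) ∂ν = 0 :=
      (hDUI₂ r hr).unique hD0
    -- integrability of the two pieces
    have hA : Integrable (fun x => (n : ℝ) * r ^ (n - 1) * Real.exp (-(f r x))) ν := by
      simpa [mul_assoc] using he_int.const_mul ((n : ℝ) * r ^ (n - 1))
    have hB : Integrable (fun x => r ^ n * Real.exp (-(f r x)) * g x) ν := by
      have h2 := hA.sub (hDUI₁ r hr)
      have heq : ((fun x => (n : ℝ) * r ^ (n - 1) * Real.exp (-(f r x)))
          - fun x => (n : ℝ) * r ^ (n - 1) * Real.exp (-(f r x))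
            - r ^ n * Real.exp (-(f r x)) * deriv (fun s => f s x) r)
          = fun x => r ^ n * Real.exp (-(f r x)) * g x := by
        funext x
        simp only [Pi.sub_apply, hg]
        ring
      rwa [heq] at h2
    have hAB : ∫ x, r ^ n * Real.exp (-(f r x)) * g x ∂ν
        = ∫ x, (n : ℝ) * r ^ (n - 1) * Real.exp (-(f r x)) ∂ν := by
      have := integral_sub hA hB
      rw [hzero] at this
      linarith
    have hA_val : ∫ x, (n : ℝ) * r ^ (n - 1) * Real.exp (-(f r x)) ∂ν
        = (n : ℝ) * r ^ (n - 1) * (1 / c) := by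
      rw [show (fun x => (n : ℝ) * r ^ (n - 1) * Real.exp (-(f r x)))
        = fun x => ((n : ℝ) * r ^ (n - 1)) * Real.exp (-(f r x)) from rfl,
        integral_const_mul, he_val]
    -- ∫ g w = n / r
    have hrpow : r ^ (n - 1) * r = r ^ n := by
      rw [← pow_succ]
      congr 1
      omega
    have hgw_int : Integrable (fun x => g x * w x) ν := by
      have := hB.const_mul (c / r ^ n)
      have heq : (fun x => c / r ^ n * (r ^ n * Real.exp (-(f r x)) * g x))
          = fun x => g x * w x := by
        funext x
        simp only [hw]
        field_simp
      rwa [heq] at this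
    have hgw_val : ∫ x, g x * w x ∂ν = (n : ℝ) / r := by
      have h1 : ∫ x, g x * w x ∂ν
          = (c / r ^ n) * ∫ x, r ^ n * Real.exp (-(f r x)) * g x ∂ν := by
        rw [← integral_const_mul]
        congr 1
        funext x
        simp only [hw]
        field_simp
      rw [h1, hAB, hA_val]
      field_simp
      rw [← hrpow]
    -- Jensen step
    set m : ℝ := deriv a r + (n : ℝ) / r with hm
    have hhw_int : Integrable (fun x => (deriv a r + g x) * w x) ν := by
      have h1 := (hw_int.const_mul (deriv a r)).add hgw_int
      have heq : ((fun x => deriv a r * w x) + fun x => g x * w x)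
          = fun x => (deriv a r + g x) * w x := by
        funext x
        simp only [Pi.add_apply]
        ring
      rwa [heq] at h1
    have hhw_val : ∫ x, (deriv a r + g x) * w x ∂ν = m := by
      have h1 : ∫ x, (deriv a r + g x) * w x ∂ν
          = ∫ x, (deriv a r * w x + g x * w x) ∂ν := by
        congr 1; funext x; ring
      rw [h1, integral_add (hw_int.const_mul (deriv a r)) hgw_int,
        integral_const_mul, hw_norm, hgw_val, hm]
      ring
    have hh2_int : Integrable (fun x => (deriv a r + g x) ^ 2 * w x) ν := hfib r hr
    have hw_nonneg : ∀ x, 0 ≤ w x := fun x => by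
      simp only [hw]; positivity
    have hvar : 0 ≤ ∫ x, (deriv a r + g x - m) ^ 2 * w x ∂ν :=
      integral_nonneg fun x => mul_nonneg (sq_nonneg _) (hw_nonneg x)
    have hexp : ∫ x, (deriv a r + g x - m) ^ 2 * w x ∂ν
        = (∫ x, (deriv a r + g x) ^ 2 * w x ∂ν) - m ^ 2 := by
      have h1 : (fun x => (deriv a r + g x - m) ^ 2 * w x)
          = fun x => ((deriv a r + g x) ^ 2 * w x
            - (2 * m) * ((deriv a r + g x) * w x)) + m ^ 2 * w x := by
        funext x; ring
      have hI1 : Integrable (fun x => (deriv a r + g x) ^ 2 * w x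
          - 2 * m * ((deriv a r + g x) * w x)) ν := by
        have h2 := hh2_int.sub (hhw_int.const_mul (2 * m))
        have heq : ((fun x => (deriv a r + g x) ^ 2 * w x)
            - fun x => 2 * m * ((deriv a r + g x) * w x))
            = fun x => (deriv a r + g x) ^ 2 * w x
              - 2 * m * ((deriv a r + g x) * w x) := by
          funext x
          simp [Pi.sub_apply]
        rwa [heq] at h2
      rw [h1, integral_add hI1 (hw_int.const_mul (m ^ 2)),
        integral_sub hh2_int (hhw_int.const_mul (2 * m)),
        integral_const_mul, integral_const_mul, hhw_val, hw_norm]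
      ring
    rw [hexp] at hvar
    have : m ^ 2 ≤ ∫ x, (deriv a r + g x) ^ 2 * w x ∂ν := by linarith
    simpa [hm, hw, hg] using this
  -- integrate the pointwise inequality
  refine setIntegral_mono_on hintR hintL measurableSet_Ioi fun r hr => ?_
  have hK : (0:ℝ) ≤ (4 * Real.pi * τ) ^ (-(1 : ℝ) / 2) * Real.exp (-(a r)) := by
    positivity
  exact mul_le_mul_of_nonneg_right (key r hr) hK
end
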